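/- arXiv:2201.05943 — 6 statements merged into one kernel-verified Lean document; each statement's English description precedes it below -/
import Mathlib

section
/- Let m ≥ 1, let A = (Fin m → Bool), let κ ≤ b, and let k* : Fin κ → A. Every finite set S of input sequences of length b that covers all wrong keys under the naive error function E^N (i.e., for every key k ≠ k* there exists i ∈ S with E^N(i,k) = true) has cardinality at least 2^(κ·m) − 1; moreover, there exists such a covering set S of cardinality exactly 2^(κ·m) − 1. -/
/-- The κ-prefix of an input sequence `i` of length `b` (with `κ ≤ b`). -/
def kprefix {m b κ : ℕ} (h : κ ≤ b) (i : Fin b → Fin m → Bool) :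
    Fin κ → Fin m → Bool :=
  fun j => i (Fin.castLE h j)

/-- The naive error function: `EN i k = true` iff `k ≠ k*` and `k` equals the
κ-prefix of `i`. -/
def EN {m b κ : ℕ} (h : κ ≤ b) (kstar : Fin κ → Fin m → Bool)
    (i : Fin b → Fin m → Bool) (k : Fin κ → Fin m → Bool) : Bool :=
  decide (k ≠ kstar) && decide (k = kprefix h i)

/-- Extend a key to an input sequence by padding with `false`. -/
def extkey {m b κ : ℕ} (h : κ ≤ b) (k : Fin κ → Fin m → Bool) :
    Fin b → Fin m → Bool :=
  fun j => if hj : (j : ℕ) < κ then k ⟨j, hj⟩ else fun _ => false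

lemma kprefix_extkey {m b κ : ℕ} (h : κ ≤ b) (k : Fin κ → Fin m → Bool) :
    kprefix h (extkey h k) = k := by
  funext j
  simp [kprefix, extkey, j.isLt]

lemma card_keys (m κ : ℕ) :
    Fintype.card (Fin κ → Fin m → Bool) = 2 ^ (κ * m) := by
  rw [mul_comm]
  simp [pow_mul]

/-- Every finite set of input sequences covering all wrong keys under the naive
error function has cardinality at least `2^(κ·m) - 1`, and there is such a
covering set of exactly that cardinality. -/
theorem naive_cover_card
    (m b κ : ℕ) (hm : 1 ≤ m) (hκb : κ ≤ b)
    (kstar : Fin κ → Fin m → Bool) :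
    (∀ S : Finset (Fin b → Fin m → Bool),
        (∀ k : Fin κ → Fin m → Bool, k ≠ kstar →
            ∃ i ∈ S, EN hκb kstar i k = true) →
        2 ^ (κ * m) - 1 ≤ S.card)
      ∧ ∃ S : Finset (Fin b → Fin m → Bool),
          (∀ k : Fin κ → Fin m → Bool, k ≠ kstar →
              ∃ i ∈ S, EN hκb kstar i k = true)
          ∧ S.card = 2 ^ (κ * m) - 1 := by
  constructor
  · intro S hS
    classical
    have h' : ∀ k : Fin κ → Fin m → Bool, ∃ i, k ≠ kstar →
        i ∈ S ∧ EN hκb kstar i k = true := by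
      intro k
      by_cases hk : k = kstar
      · exact ⟨default, fun h => absurd hk h⟩
      · obtain ⟨i, hi, he⟩ := hS k hk
        exact ⟨i, fun _ => ⟨hi, he⟩⟩
    choose f hf using h'
    have hcard : (Finset.univ.erase kstar : Finset (Fin κ → Fin m → Bool)).card
        = 2 ^ (κ * m) - 1 := by
      rw [Finset.card_erase_of_mem (Finset.mem_univ _), Finset.card_univ, card_keys]
    rw [← hcard]
    apply Finset.card_le_card_of_injOn f
    · intro k hk; exact (hf k (Finset.mem_erase.mp hk).1).1
    · intro k1 h1 k2 h2 heq
      have e1 := (hf k1 (Finset.mem_erase.mp h1).1).2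
      have e2 := (hf k2 (Finset.mem_erase.mp h2).1).2
      simp only [EN, Bool.and_eq_true, decide_eq_true_eq] at e1 e2
      rw [e1.2, e2.2, heq]
  · classical
    refine ⟨(Finset.univ.erase kstar).image (extkey hκb), ?_, ?_⟩
    · intro k hk
      refine ⟨extkey hκb k, Finset.mem_image_of_mem _ (Finset.mem_erase.mpr ⟨hk, Finset.mem_univ _⟩), ?_⟩
      simp [EN, hk, kprefix_extkey]
    · rw [Finset.card_image_of_injective _ ?_, Finset.card_erase_of_mem (Finset.mem_univ _),
        Finset.card_univ, card_keys]
      intro k1 k2 h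
      have := congrArg (kprefix hκb) h
      rwa [kprefix_extkey, kprefix_extkey] at this
end

section
/- Let m ≥ 1, let A = (Fin m → Bool), let κ ≤ b, and let k* : Fin κ → A. The number of input–key pairs on which the naive error function produces an error is exactly (2^(κ·m) − 1) · 2^((b−κ)·m); that is, the cardinality of { (i,k) : (Fin b → A) × (Fin κ → A) | E^N(i,k) = true } equals (2^(κ·m) − 1) · 2^((b−κ)·m). -/
/-- Split an input into its prefix and suffix. -/
def splitEquiv (m b κ : ℕ) (h : κ ≤ b) :
    (Fin b → Fin m → Bool) ≃
      (Fin κ → Fin m → Bool) × (Fin (b - κ) → Fin m → Bool) :=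
  ((finCongr (Nat.add_sub_cancel' h).symm).arrowCongr (Equiv.refl _)).trans
    ((finSumFinEquiv.symm.arrowCongr (Equiv.refl _)).trans
      (Equiv.sumArrowEquivProdArrow _ _ _))

theorem splitEquiv_fst (m b κ : ℕ) (h : κ ≤ b) (i : Fin b → Fin m → Bool) :
    (splitEquiv m b κ h i).1 = kprefix h i := by
  funext j
  simp only [splitEquiv, kprefix, Equiv.trans_apply, Equiv.arrowCongr_apply,
    Equiv.sumArrowEquivProdArrow, Equiv.coe_fn_mk, Function.comp_apply,
    Equiv.refl_apply, Equiv.symm_symm, finSumFinEquiv_apply_left, finCongr_symm,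
    finCongr_apply]
  congr 1

def pairEquiv (m b κ : ℕ) (h : κ ≤ b) (kstar : Fin κ → Fin m → Bool) :
    {p : (Fin b → Fin m → Bool) × (Fin κ → Fin m → Bool) //
        EN h kstar p.1 p.2 = true} ≃
      {k : Fin κ → Fin m → Bool // k ≠ kstar} × (Fin (b - κ) → Fin m → Bool) where
  toFun p := (⟨p.1.2, by
      have := p.2
      simp only [EN, Bool.and_eq_true, decide_eq_true_eq] at this
      exact this.1⟩, (splitEquiv m b κ h p.1.1).2)
  invFun q := ⟨((splitEquiv m b κ h).symm (q.1.1, q.2), q.1.1), by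
      simp only [EN, Bool.and_eq_true, decide_eq_true_eq]
      refine ⟨q.1.2, ?_⟩
      rw [← splitEquiv_fst m b κ h, Equiv.apply_symm_apply]⟩
  left_inv p := by
    have hp := p.2
    simp only [EN, Bool.and_eq_true, decide_eq_true_eq] at hp
    apply Subtype.ext
    apply Prod.ext
    · show (splitEquiv m b κ h).symm (p.1.2, (splitEquiv m b κ h p.1.1).2) = p.1.1
      rw [hp.2, ← splitEquiv_fst m b κ h]
      exact (splitEquiv m b κ h).symm_apply_apply _
    · rfl
  right_inv q := by
    apply Prod.ext
    · apply Subtype.ext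
      rfl
    · show ((splitEquiv m b κ h) ((splitEquiv m b κ h).symm (q.1.1, q.2))).2 = q.2
      rw [Equiv.apply_symm_apply]

/-- The number of input–key pairs on which the naive error function produces an
error is exactly `(2^(κ·m) - 1) · 2^((b-κ)·m)`. -/
theorem card_naive_error_pairs
    (m b κ : ℕ) (hm : 1 ≤ m) (hκb : κ ≤ b)
    (kstar : Fin κ → Fin m → Bool) :
    Nat.card {p : (Fin b → Fin m → Bool) × (Fin κ → Fin m → Bool) //
        EN hκb kstar p.1 p.2 = true}
      = (2 ^ (κ * m) - 1) * 2 ^ ((b - κ) * m) := by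
  rw [Nat.card_congr (pairEquiv m b κ hκb kstar), Nat.card_prod]
  congr 1
  · rw [Nat.card_eq_fintype_card]
    have : Fintype.card {k : Fin κ → Fin m → Bool // k ≠ kstar}
        = Fintype.card {k : Fin κ → Fin m → Bool // ¬ k = kstar} := rfl
    rw [this, Fintype.card_subtype_compl, Fintype.card_subtype_eq]
    simp [Fintype.card_fun, ← pow_mul, mul_comm]
  · rw [Nat.card_eq_fintype_card]
    simp [Fintype.card_fun, ← pow_mul, mul_comm]
end

section
/- Let m ≥ 1, let A = (Fin m → Bool), let κ = κ_s + κ_f with κ_s ≤ b, and let k* : Fin κ → A be the correct key. The number of input–key pairs on which the prefix error function E^S produces an error is exactly (2^(κ·m) − 1) · 2^((b−κ_s)·m); that is, the cardinality of { (i,k) : (Fin b → A) × (Fin κ → A) | E^S(i,k) = true } equals (2^(κ·m) − 1) · 2^((b−κ_s)·m). -/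
/-- The κ_s-prefix of a key sequence of length `κs + κf`. -/
def sprefix {m κs κf : ℕ} (k : Fin (κs + κf) → Fin m → Bool) :
    Fin κs → Fin m → Bool :=
  fun j => k (Fin.castLE (Nat.le_add_right κs κf) j)

/-- The κ_s-prefix of an input sequence `i` of length `b` (with `κs ≤ b`). -/
def iprefix {m b κs : ℕ} (h : κs ≤ b) (i : Fin b → Fin m → Bool) :
    Fin κs → Fin m → Bool :=
  fun j => i (Fin.castLE h j)

/-- The κ_f-suffix of a key sequence of length `κs + κf`. -/
def ksuffix {m κs κf : ℕ} (k : Fin (κs + κf) → Fin m → Bool) :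
    Fin κf → Fin m → Bool :=
  fun j => k (Fin.natAdd κs j)

/-- The prefix error function: `ES i k = true` iff `k ≠ k*` and the κ_s-prefix
of `k` equals the κ_s-prefix of `i`. -/
def ES {m b κs κf : ℕ} (h : κs ≤ b) (kstar : Fin (κs + κf) → Fin m → Bool)
    (i : Fin b → Fin m → Bool) (k : Fin (κs + κf) → Fin m → Bool) : Bool :=
  decide (k ≠ kstar) && decide (sprefix k = iprefix h i)

/-- The number of input–key pairs on which the prefix error function produces
an error is exactly `(2^(κ·m) - 1) · 2^((b-κ_s)·m)` where `κ = κs + κf`. -/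
theorem card_prefix_error_pairs
    (m b κs κf : ℕ) (hm : 1 ≤ m) (hκb : κs ≤ b)
    (kstar : Fin (κs + κf) → Fin m → Bool) :
    Nat.card {p : (Fin b → Fin m → Bool) × (Fin (κs + κf) → Fin m → Bool) //
        ES hκb kstar p.1 p.2 = true}
      = (2 ^ ((κs + κf) * m) - 1) * 2 ^ ((b - κs) * m) := by
  have e : {p : (Fin b → Fin m → Bool) × (Fin (κs + κf) → Fin m → Bool) //
        ES hκb kstar p.1 p.2 = true} ≃
      {k : Fin (κs + κf) → Fin m → Bool // k ≠ kstar} ×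
        (Fin (b - κs) → Fin m → Bool) := by
    refine
      { toFun := fun p =>
          (⟨p.1.2, by
            have := p.2
            simp [ES] at this
            exact this.1⟩,
            fun j => p.1.1 ⟨κs + j, by omega⟩)
        invFun := fun q =>
          ⟨(fun j => if h : (j : ℕ) < κs then
              q.1.1 (Fin.castLE (Nat.le_add_right κs κf) ⟨j, h⟩)
            else q.2 ⟨(j : ℕ) - κs, by omega⟩, q.1.1), ?_⟩
        left_inv := ?_
        right_inv := ?_ }
    · simp only [ES, Bool.and_eq_true, decide_eq_true_eq]
      refine ⟨q.1.2, ?_⟩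
      funext j
      simp [sprefix, iprefix, j.isLt]
    · rintro ⟨⟨i, k⟩, hp⟩
      simp only [ES, Bool.and_eq_true, decide_eq_true_eq] at hp
      ext j x
      · simp only
        split_ifs with h
        · have := congrFun (congrFun hp.2 ⟨j, h⟩) x
          simpa [sprefix, iprefix, Fin.castLE] using this
        · congr 1
          apply Fin.ext
          simp only [Fin.val_mk]
          omega
      · rfl
    · rintro ⟨⟨k, hk⟩, s⟩
      refine Prod.ext (Subtype.ext rfl) ?_
      funext j
      simp only
      have h : ¬ (κs + (j : ℕ) < κs) := by omega
      rw [dif_neg h]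
      simp
  rw [Nat.card_congr e, Nat.card_prod]
  have h1 : Nat.card {k : Fin (κs + κf) → Fin m → Bool // k ≠ kstar}
      = 2 ^ ((κs + κf) * m) - 1 := by
    rw [Nat.card_eq_fintype_card, Fintype.card_subtype_compl]
    simp [Fintype.card_fun, ← pow_mul, Nat.mul_comm]
  have h2 : Nat.card (Fin (b - κs) → Fin m → Bool) = 2 ^ ((b - κs) * m) := by
    rw [Nat.card_eq_fintype_card]
    simp [Fintype.card_fun, ← pow_mul, Nat.mul_comm]
  rw [h1, h2]
end

section
/- Let m ≥ 1, let A = (Fin m → Bool), let κ = κ_s + κ_f with κ_f ≥ 1 and κ_s ≤ b, and let k* : Fin κ → A. Every finite set S of input sequences of length b that covers all wrong keys under the prefix error function E^S (i.e., for every key k ≠ k* there exists i ∈ S with E^S(i,k) = true) has cardinality at least 2^(κ_s·m). -/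
/-- Every finite set of input sequences covering all wrong keys under the
prefix error function has cardinality at least `2^(κ_s·m)`. -/
theorem prefix_cover_lower_bound
    (m b κs κf : ℕ) (hm : 1 ≤ m) (hκf : 1 ≤ κf) (hκb : κs ≤ b)
    (kstar : Fin (κs + κf) → Fin m → Bool)
    (S : Finset (Fin b → Fin m → Bool))
    (hcov : ∀ k : Fin (κs + κf) → Fin m → Bool, k ≠ kstar →
        ∃ i ∈ S, ES hκb kstar i k = true) :
    2 ^ (κs * m) ≤ S.card := by

  classical
  -- For each prefix p, build a key with that prefix, differing from kstar on the suffix.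
  set key : (Fin κs → Fin m → Bool) → (Fin (κs + κf) → Fin m → Bool) :=
    fun p => Fin.addCases p (fun j l => ! kstar (Fin.natAdd κs j) l) with hkey
  have hspre : ∀ p, sprefix (key p) = p := by
    intro p
    funext j
    simp only [sprefix, hkey]
    have : (Fin.castLE (Nat.le_add_right κs κf) j) = Fin.castAdd κf j := rfl
    rw [this, Fin.addCases_left]
  have hne : ∀ p, key p ≠ kstar := by
    intro p h
    have h0 : key p (Fin.natAdd κs ⟨0, hκf⟩) ⟨0, hm⟩ =
        kstar (Fin.natAdd κs ⟨0, hκf⟩) ⟨0, hm⟩ := by rw [h]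
    simp only [hkey, Fin.addCases_right] at h0
    exact (Bool.not_ne_self _) h0
  -- choose a covering input for each prefix
  have hchoice : ∀ p : Fin κs → Fin m → Bool,
      ∃ i ∈ S, iprefix hκb i = p := by
    intro p
    obtain ⟨i, hiS, hE⟩ := hcov (key p) (hne p)
    simp only [ES, Bool.and_eq_true, decide_eq_true_eq] at hE
    exact ⟨i, hiS, by rw [← hE.2, hspre]⟩
  choose f hfS hfp using hchoice
  have hinj : Function.Injective f := by
    intro p q h
    rw [← hfp p, ← hfp q, h]
  calc 2 ^ (κs * m) = Fintype.card (Fin κs → Fin m → Bool) := by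
        simp [Fintype.card_fun, pow_mul]
        rw [← pow_mul, ← pow_mul, Nat.mul_comm]
    _ ≤ S.card := by
        rw [← Fintype.card_coe S]
        exact Fintype.card_le_of_injective (fun p => ⟨f p, hfS p⟩)
          (fun p q h => hinj (by simpa using congrArg Subtype.val h))
end

section
/- (Theorem 1) Let m ≥ 1, let A = (Fin m → Bool), let κ = κ_s + κ_f with κ_s ≤ b, let k* : Fin κ → A be the correct key, and let k** : Fin κ_f → A be such that k** is not equal to the κ_f-suffix of k*. Let E : (Fin b → A) × (Fin κ → A) → Bool be any error function satisfying: (i) for all (i,k), if E^S(i,k) = true then E(i,k) = true; and (ii) for all (i,k) with the κ_f-suffix of k equal to k**, if E(i,k) = true then E^S(i,k) = true (i.e., errors are added only at pairs (i,k) with κ_f-suffix of k different from k** and k ≠ k*). Then every finite set S of input sequences of length b that covers all wrong keys under E (for every key k ≠ k* there exists i ∈ S with E(i,k) = true) has cardinality at least 2^(κ_s·m). -/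
/-- Theorem 1 of TriLock: if an error function `E` contains all errors of the
prefix error function `ES`, and adds extra errors only at pairs `(i,k)` whose
key's κ_f-suffix differs from `k**` (and `k ≠ k*`), then every finite set of
input sequences covering all wrong keys under `E` has cardinality at least
`2^(κ_s·m)`. -/
theorem trilock_theorem_one
    (m b κs κf : ℕ) (hm : 1 ≤ m) (hκb : κs ≤ b)
    (kstar : Fin (κs + κf) → Fin m → Bool)
    (kss : Fin κf → Fin m → Bool) (hkss : kss ≠ ksuffix kstar)
    (E : (Fin b → Fin m → Bool) → (Fin (κs + κf) → Fin m → Bool) → Bool)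
    (hE1 : ∀ i k, ES hκb kstar i k = true → E i k = true)
    (hE2 : ∀ i k, ksuffix k = kss → E i k = true → ES hκb kstar i k = true)
    (S : Finset (Fin b → Fin m → Bool))
    (hcov : ∀ k : Fin (κs + κf) → Fin m → Bool, k ≠ kstar →
        ∃ i ∈ S, E i k = true) :
    2 ^ (κs * m) ≤ S.card := by

  classical
  -- combine a prefix with the fixed suffix kss
  set combine : (Fin κs → Fin m → Bool) → (Fin (κs + κf) → Fin m → Bool) :=
    fun p => Fin.addCases (fun j => p j) (fun j => kss j) with hcomb
  have hpre : ∀ p, sprefix (combine p) = p := by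
    intro p; funext j
    simp [hcomb, sprefix]
    have : (Fin.castLE (Nat.le_add_right κs κf) j) = Fin.castAdd κf j := rfl
    rw [this, Fin.addCases_left]
  have hsuf : ∀ p, ksuffix (combine p) = kss := by
    intro p; funext j
    simp [hcomb, ksuffix, Fin.addCases_right]
  have hne : ∀ p, combine p ≠ kstar := by
    intro p h
    apply hkss
    rw [← hsuf p, h]
  choose f hfS hfE using fun p => hcov (combine p) (hne p)
  have hkey : ∀ p, iprefix hκb (f p) = p := by
    intro p
    have := hE2 (f p) (combine p) (hsuf p) (hfE p)
    simp [ES] at this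
    rw [← this.2, hpre]
  have hinj : Function.Injective f := by
    intro p q h
    rw [← hkey p, ← hkey q, h]
  calc 2 ^ (κs * m) = Fintype.card (Fin κs → Fin m → Bool) := by
        simp [Fintype.card_fun, mul_comm, pow_mul]
    _ ≤ S.card := by
        have : Finset.univ.image f ⊆ S := by
          intro x hx
          simp at hx
          obtain ⟨p, rfl⟩ := hx
          exact hfS p
        calc Fintype.card (Fin κs → Fin m → Bool)
            = (Finset.univ.image f).card := by
              rw [Finset.card_image_of_injective _ hinj, Finset.card_univ]
          _ ≤ S.card := Finset.card_le_card this
end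

section
/- Let m ≥ 1, let A = (Fin m → Bool), let κ = κ_s + κ_f with κ_s ≤ b, let k* : Fin κ → A, and let k** : Fin κ_f → A be such that k** is not equal to the κ_f-suffix of k*. Define the maximal combined error set as the set of pairs (i,k) with either E^S(i,k) = true or (i,k) ∈ P, where P = { (i,k) | the κ_f-suffix of k is not equal to k** and k ≠ k* }. Then the set of error-free pairs (the complement of the combined error set in (Fin b → A) × (Fin κ → A)) has cardinality exactly 2^(κ_s·m) · 2^(b·m); equivalently, the combined error set has cardinality 2^((κ+b)·m) − 2^((κ_s+b)·m), so its fraction of all input–key pairs equals 1 − 1/2^(κ_f·m). -/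
def combine {m κs κf : ℕ} (p : Fin κs → Fin m → Bool) (s : Fin κf → Fin m → Bool) :
    Fin (κs + κf) → Fin m → Bool :=
  fun j => Fin.addCases (motive := fun _ => Fin m → Bool) p s j

lemma sprefix_combine {m κs κf : ℕ} (p : Fin κs → Fin m → Bool)
    (s : Fin κf → Fin m → Bool) : sprefix (combine p s) = p := by
  funext j
  show Fin.addCases (motive := fun _ => Fin m → Bool) p s (Fin.castAdd κf j) = p j
  exact Fin.addCases_left j

lemma ksuffix_combine {m κs κf : ℕ} (p : Fin κs → Fin m → Bool)
    (s : Fin κf → Fin m → Bool) : ksuffix (combine p s) = s := by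
  funext j
  show Fin.addCases (motive := fun _ => Fin m → Bool) p s (Fin.natAdd κs j) = s j
  exact Fin.addCases_right j

lemma combine_eq {m κs κf : ℕ} (k : Fin (κs + κf) → Fin m → Bool) :
    combine (sprefix k) (ksuffix k) = k := by
  funext j
  refine Fin.addCases (motive := fun j => combine (sprefix k) (ksuffix k) j = k j) ?_ ?_ j
  · intro j
    have h1 : combine (sprefix k) (ksuffix k) (Fin.castAdd κf j) = sprefix k j :=
      Fin.addCases_left j
    rw [h1]; rfl
  · intro j
    have h1 : combine (sprefix k) (ksuffix k) (Fin.natAdd κs j) = ksuffix k j :=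
      Fin.addCases_right j
    rw [h1]; rfl

lemma card_fun_aux (m n : ℕ) : Fintype.card (Fin n → Fin m → Bool) = 2 ^ (n * m) := by
  simp [← pow_mul, mul_comm]

/-- Counting the maximal combined error set of TriLock: the error-free pairs
(neither an `ES` error nor in `P`) number exactly `2^(κ_s·m) · 2^(b·m)`;
equivalently the combined error set has cardinality
`2^((κ+b)·m) − 2^((κ_s+b)·m)`, i.e., its fraction of all input–key pairs is
`1 − 1/2^(κ_f·m)`. -/
theorem card_combined_error_set
    (m b κs κf : ℕ) (hm : 1 ≤ m) (hκb : κs ≤ b)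
    (kstar : Fin (κs + κf) → Fin m → Bool)
    (kss : Fin κf → Fin m → Bool) (hkss : kss ≠ ksuffix kstar) :
    Nat.card {p : (Fin b → Fin m → Bool) × (Fin (κs + κf) → Fin m → Bool) //
        ¬ (ES hκb kstar p.1 p.2 = true ∨ (ksuffix p.2 ≠ kss ∧ p.2 ≠ kstar))}
      = 2 ^ (κs * m) * 2 ^ (b * m)
    ∧ Nat.card {p : (Fin b → Fin m → Bool) × (Fin (κs + κf) → Fin m → Bool) //
        ES hκb kstar p.1 p.2 = true ∨ (ksuffix p.2 ≠ kss ∧ p.2 ≠ kstar)}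
      = 2 ^ ((κs + κf + b) * m) - 2 ^ ((κs + b) * m)
    ∧ ((Nat.card {p : (Fin b → Fin m → Bool) × (Fin (κs + κf) → Fin m → Bool) //
          ES hκb kstar p.1 p.2 = true ∨ (ksuffix p.2 ≠ kss ∧ p.2 ≠ kstar)} : ℚ)
        / 2 ^ ((κs + κf + b) * m)
        = 1 - 1 / 2 ^ (κf * m)) := by
  classical
  have hchar : ∀ (i : Fin b → Fin m → Bool) (k : Fin (κs + κf) → Fin m → Bool),
      (¬ (ES hκb kstar i k = true ∨ (ksuffix k ≠ kss ∧ k ≠ kstar))) ↔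
      (k = kstar ∨ (ksuffix k = kss ∧ sprefix k ≠ iprefix hκb i)) := by
    intro i k
    by_cases hk : k = kstar
    · subst hk; simp [ES]
    · by_cases hs : ksuffix k = kss
      · simp [ES, hk, hs]
      · simp [ES, hk, hs]
  -- the bijection
  set f : (Fin κs → Fin m → Bool) × (Fin b → Fin m → Bool) →
      {p : (Fin b → Fin m → Bool) × (Fin (κs + κf) → Fin m → Bool) //
        ¬ (ES hκb kstar p.1 p.2 = true ∨ (ksuffix p.2 ≠ kss ∧ p.2 ≠ kstar))} :=
    fun q => ⟨(q.2, if q.1 = iprefix hκb q.2 then kstar else combine q.1 kss), by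
      rw [hchar]
      split_ifs with h
      · exact Or.inl rfl
      · exact Or.inr ⟨ksuffix_combine _ _, by rw [sprefix_combine]; exact h⟩⟩ with hf
  have hbij : Function.Bijective f := by
    constructor
    · rintro ⟨p1, i1⟩ ⟨p2, i2⟩ h
      have hi : i1 = i2 := congrArg (fun x => x.1.1) h
      subst hi
      have hk : (if p1 = iprefix hκb i1 then kstar else combine p1 kss)
          = (if p2 = iprefix hκb i1 then kstar else combine p2 kss) :=
        congrArg (fun x => x.1.2) h
      have hp : p1 = p2 := by
        split_ifs at hk with h1 h2 h2
        · exact h1.trans h2.symm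
        · exact absurd ((congrArg ksuffix hk).trans (ksuffix_combine _ _)).symm hkss
        · exact absurd ((congrArg ksuffix hk.symm).trans (ksuffix_combine _ _)).symm hkss
        · have := (congrArg sprefix hk)
          rwa [sprefix_combine, sprefix_combine] at this
      rw [hp]
    · rintro ⟨⟨i, k⟩, hp⟩
      dsimp only at hp
      rw [hchar] at hp
      rcases hp with h | ⟨hs, hne⟩
      · refine ⟨(iprefix hκb i, i), ?_⟩
        apply Subtype.ext
        show (i, if iprefix hκb i = iprefix hκb i then kstar else _) = (i, k)
        rw [if_pos rfl]
        exact congrArg (Prod.mk i) h.symm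
      · refine ⟨(sprefix k, i), ?_⟩
        apply Subtype.ext
        show (i, if sprefix k = iprefix hκb i then kstar else combine (sprefix k) kss)
            = (i, k)
        rw [if_neg hne, ← hs, combine_eq]
  have key1 : Nat.card {p : (Fin b → Fin m → Bool) × (Fin (κs + κf) → Fin m → Bool) //
      ¬ (ES hκb kstar p.1 p.2 = true ∨ (ksuffix p.2 ≠ kss ∧ p.2 ≠ kstar))}
      = 2 ^ (κs * m) * 2 ^ (b * m) := by
    rw [← Nat.card_eq_of_bijective f hbij, Nat.card_eq_fintype_card, Fintype.card_prod,
      card_fun_aux, card_fun_aux]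
  have htot : Fintype.card ((Fin b → Fin m → Bool) × (Fin (κs + κf) → Fin m → Bool))
      = 2 ^ ((κs + κf + b) * m) := by
    rw [Fintype.card_prod, card_fun_aux, card_fun_aux, ← pow_add]
    congr 1
    ring
  have key2 : Nat.card {p : (Fin b → Fin m → Bool) × (Fin (κs + κf) → Fin m → Bool) //
      ES hκb kstar p.1 p.2 = true ∨ (ksuffix p.2 ≠ kss ∧ p.2 ≠ kstar)}
      = 2 ^ ((κs + κf + b) * m) - 2 ^ ((κs + b) * m) := by
    have h1 := Fintype.card_subtype_compl
      (fun p : (Fin b → Fin m → Bool) × (Fin (κs + κf) → Fin m → Bool) =>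
        ES hκb kstar p.1 p.2 = true ∨ (ksuffix p.2 ≠ kss ∧ p.2 ≠ kstar))
    have h2 := Fintype.card_subtype_le
      (fun p : (Fin b → Fin m → Bool) × (Fin (κs + κf) → Fin m → Bool) =>
        ES hκb kstar p.1 p.2 = true ∨ (ksuffix p.2 ≠ kss ∧ p.2 ≠ kstar))
    rw [htot] at h1 h2
    rw [Nat.card_eq_fintype_card] at key1 ⊢
    rw [key1] at h1
    have hsum : 2 ^ (κs * m) * 2 ^ (b * m) = 2 ^ ((κs + b) * m) := by
      rw [← pow_add]; congr 1; ring
    omega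
  refine ⟨key1, key2, ?_⟩
  rw [key2]
  have hle : 2 ^ ((κs + b) * m) ≤ 2 ^ ((κs + κf + b) * m) :=
    Nat.pow_le_pow_right (by norm_num) (Nat.mul_le_mul_right m (by omega))
  have hT : ((2 : ℚ)) ^ ((κs + κf + b) * m) = 2 ^ ((κs + b) * m) * 2 ^ (κf * m) := by
    rw [← pow_add]; congr 1; ring
  push_cast [Nat.cast_sub hle]
  rw [hT]
  have h1 : ((2 : ℚ)) ^ ((κs + b) * m) ≠ 0 := by positivity
  have h2 : ((2 : ℚ)) ^ (κf * m) ≠ 0 := by positivity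
  field_simp
end
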